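/- If Z and Z' are both ∘-bisimulations on a model M, then Z ∪ Z' is a ∘-bisimulation on M. -/
import Mathlib


/-- A Kripke model. -/
structure Model (W : Type) where
  R : W → W → Prop
  V : ℕ → W → Prop

/-- Z is a ∘-bisimulation on the model M: Z is nonempty and whenever sZs',
(Inv), (∘-Forth) and (∘-Back) hold. -/
def isCircBisim {W : Type} (M : Model W) (Z : W → W → Prop) : Prop :=
  (∃ a b, Z a b) ∧
  ∀ s s', Z s s' →
    ((∀ p, M.V p s ↔ M.V p s') ∧
     (∀ t, M.R s t → ¬ Z s t → ∃ t', M.R s' t' ∧ Z t t') ∧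
     (∀ t', M.R s' t' → ¬ Z s' t' → ∃ t, M.R s t ∧ Z t t'))

/-- The union of two ∘-bisimulations on M is a ∘-bisimulation on M. -/
theorem stmt9 (W : Type) [Nonempty W] (M : Model W) (Z Z' : W → W → Prop)
    (hZ : isCircBisim M Z) (hZ' : isCircBisim M Z') :
    isCircBisim M (fun a b => Z a b ∨ Z' a b) := by
  obtain ⟨⟨a, b, hab⟩, hZ2⟩ := hZ
  obtain ⟨_, hZ'2⟩ := hZ'
  refine ⟨⟨a, b, Or.inl hab⟩, ?_⟩
  rintro s s' (h | h)
  · obtain ⟨hi, hf, hb⟩ := hZ2 s s' h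
    exact ⟨hi,
      fun t hR hn => (hf t hR (fun hz => hn (Or.inl hz))).imp
        (fun t' ⟨h1, h2⟩ => ⟨h1, Or.inl h2⟩),
      fun t' hR hn => (hb t' hR (fun hz => hn (Or.inl hz))).imp
        (fun t ⟨h1, h2⟩ => ⟨h1, Or.inl h2⟩)⟩
  · obtain ⟨hi, hf, hb⟩ := hZ'2 s s' h
    exact ⟨hi,
      fun t hR hn => (hf t hR (fun hz => hn (Or.inr hz))).imp
        (fun t' ⟨h1, h2⟩ => ⟨h1, Or.inr h2⟩),
      fun t' hR hn => (hb t' hR (fun hz => hn (Or.inr hz))).imp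
        (fun t ⟨h1, h2⟩ => ⟨h1, Or.inr h2⟩)⟩
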